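/- For positive integers a, c, d with convergence (e.g. a,d ≥ 2), ζ_{sl(4)}(a,0,1,0,0,d+1) = ζ(d+1, a, 1) + ∑_{i=1}^{a} ζ(d+1, a+1−i, i), where ζ(s₁,s₂,s₃) := ∑_{n₁ > n₂ > n₃ ≥ 1} n₁^{-s₁} n₂^{-s₂} n₃^{-s₃} is the triple Euler sum. -/

import Mathlib

noncomputable def wittenSl4 (a b c d e f : ℕ) : ℝ :=
  ∑' (n₁ : ℕ) (n₂ : ℕ) (n₃ : ℕ),
    1 / ((n₁ + 1 : ℝ) ^ a * (n₂ + 1 : ℝ) ^ b * (n₃ + 1 : ℝ) ^ c *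
      (n₁ + n₂ + 2 : ℝ) ^ d * (n₂ + n₃ + 2 : ℝ) ^ e * (n₁ + n₂ + n₃ + 3 : ℝ) ^ f)

/-- Triple Euler sum ζ(s₁,s₂,s₃) = ∑_{n₁>n₂>n₃≥1} n₁^{-s₁} n₂^{-s₂} n₃^{-s₃}. -/
noncomputable def tripleZeta (s₁ s₂ s₃ : ℕ) : ℝ :=
  ∑' (n : ℕ) (j : ℕ) (k : ℕ),
    1 / ((n + j + k + 3 : ℝ) ^ s₁ * (n + j + 2 : ℝ) ^ s₂ * (n + 1 : ℝ) ^ s₃)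

/-!
With `x = n₁` and `z = n₃`, the partial fraction expansion
`1 / (x^a z) = 1 / ((x+z)^a z) + ∑_{i=1}^a 1 / ((x+z)^(a+1-i) x^i)`
splits each term of the Witten sum into one term of each triple Euler sum on the right, the middle
index being `n₁ + n₃`. All terms are positive and the Witten sum converges (it is dominated by
`∏ n_j^(-2)`), so the sum may be rearranged accordingly.
-/

open Finset

theorem one_div_pow_mul_eq_add_sum {K : Type*} [Field K] (a : ℕ) {x z : K} (hx : x ≠ 0)
    (hz : z ≠ 0) (hxz : x + z ≠ 0) :
    1 / (x ^ a * z) =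
      1 / ((x + z) ^ a * z) + ∑ i ∈ Icc 1 a, 1 / ((x + z) ^ (a + 1 - i) * x ^ i) := by
  induction a with
  | zero => simp
  | succ a ih =>
    have hshift : ∀ i ∈ Icc 1 a, 1 / ((x + z) ^ (a + 1 + 1 - i) * x ^ i) =
        1 / (x + z) * (1 / ((x + z) ^ (a + 1 - i) * x ^ i)) := by
      intro i hi
      rw [show a + 1 + 1 - i = a + 1 - i + 1 by grind, pow_succ]
      field_simp
    rw [sum_Icc_succ_top (by omega), sum_congr rfl hshift, ← mul_sum,
      eq_sub_of_add_eq' ih.symm, Nat.add_sub_cancel_left, pow_one]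
    field_simp
    ring

theorem Summable.tsum_prod₃ {α β γ δ : Type*} [AddCommGroup α] [UniformSpace α]
    [IsUniformAddGroup α] [CompleteSpace α] [T0Space α] {f : β × γ × δ → α} (h : Summable f) :
    ∑' p, f p = ∑' (b) (c) (d), f (b, c, d) := by
  rw [h.tsum_prod]
  exact tsum_congr fun b => (h.prod_factor b).tsum_prod

theorem Summable.of_add_sum_of_nonneg {ι κ : Type*} {f : ι → ℝ} {g : κ → ι → ℝ} {s : Finset κ}
    (hf : 0 ≤ f) (hg : ∀ k ∈ s, 0 ≤ g k) (h : Summable fun x => f x + ∑ k ∈ s, g k x) :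
    Summable f ∧ ∀ k ∈ s, Summable (g k) := by
  have hsum : ∀ x, 0 ≤ ∑ k ∈ s, g k x := fun x => sum_nonneg fun k hk => hg k hk x
  refine ⟨h.of_nonneg_of_le hf fun x => le_add_of_nonneg_right (hsum x), fun k hk => ?_⟩
  refine h.of_nonneg_of_le (hg k hk) fun x => ?_
  exact (single_le_sum (f := (g · x)) (fun j hj => hg j hj x) hk).trans
    (le_add_of_nonneg_left (hf x))

noncomputable def wittenSl4Term (a b c d e f : ℕ) (p : ℕ × ℕ × ℕ) : ℝ :=
  1 / ((p.1 + 1 : ℝ) ^ a * (p.2.1 + 1 : ℝ) ^ b * (p.2.2 + 1 : ℝ) ^ c *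
    (p.1 + p.2.1 + 2 : ℝ) ^ d * (p.2.1 + p.2.2 + 2 : ℝ) ^ e * (p.1 + p.2.1 + p.2.2 + 3 : ℝ) ^ f)

noncomputable def tripleZetaTerm (s₁ s₂ s₃ : ℕ) (p : ℕ × ℕ × ℕ) : ℝ :=
  1 / ((p.1 + p.2.1 + p.2.2 + 3 : ℝ) ^ s₁ * (p.1 + p.2.1 + 2 : ℝ) ^ s₂ * (p.1 + 1 : ℝ) ^ s₃)

theorem wittenSl4_eq_tsum {a b c d e f : ℕ} (h : Summable (wittenSl4Term a b c d e f)) :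
    wittenSl4 a b c d e f = ∑' p, wittenSl4Term a b c d e f p :=
  h.tsum_prod₃.symm

theorem tripleZeta_eq_tsum {s₁ s₂ s₃ : ℕ} (h : Summable (tripleZetaTerm s₁ s₂ s₃)) :
    tripleZeta s₁ s₂ s₃ = ∑' p, tripleZetaTerm s₁ s₂ s₃ p :=
  h.tsum_prod₃.symm

theorem wittenSl4Term_nonneg (a b c d e f : ℕ) (p : ℕ × ℕ × ℕ) :
    0 ≤ wittenSl4Term a b c d e f p := by
  unfold wittenSl4Term; positivity

theorem tripleZetaTerm_nonneg (s₁ s₂ s₃ : ℕ) (p : ℕ × ℕ × ℕ) : 0 ≤ tripleZetaTerm s₁ s₂ s₃ p := by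
  unfold tripleZetaTerm; positivity

theorem summable_one_div_succ_sq₃ : Summable fun p : ℕ × ℕ × ℕ =>
    1 / ((p.1 + 1 : ℝ) ^ 2 * (p.2.1 + 1 : ℝ) ^ 2 * (p.2.2 + 1 : ℝ) ^ 2) := by
  have h : Summable fun n : ℕ => 1 / ((n : ℝ) + 1) ^ 2 := by
    simpa using (Real.summable_one_div_nat_add_rpow 1 2).mpr one_lt_two
  have h0 : 0 ≤ fun n : ℕ => 1 / ((n : ℝ) + 1) ^ 2 := fun n => by positivity
  refine (h.mul_of_nonneg (h.mul_of_nonneg h h0 h0) h0 fun q => by positivity).congr fun p => ?_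
  simp only [one_div, mul_inv]
  ring

theorem summable_wittenSl4Term_a01001 {a d : ℕ} (ha : 2 ≤ a) (hd : 2 ≤ d) :
    Summable (wittenSl4Term a 0 1 0 0 (d + 1)) := by
  refine summable_one_div_succ_sq₃.of_nonneg_of_le (wittenSl4Term_nonneg _ _ _ _ _ _)
    fun ⟨n₁, n₂, n₃⟩ => ?_
  simp only [wittenSl4Term, pow_zero, pow_one, mul_one]
  set N : ℝ := n₁ + n₂ + n₃ + 3
  have h₁ : (1 : ℝ) ≤ n₁ + 1 := by simp
  have h₂ : (n₂ : ℝ) + 1 ≤ N := by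
    simp only [N]; linarith [n₁.cast_nonneg (α := ℝ), n₃.cast_nonneg (α := ℝ)]
  have h₃ : (n₃ : ℝ) + 1 ≤ N := by
    simp only [N]; linarith [n₁.cast_nonneg (α := ℝ), n₂.cast_nonneg (α := ℝ)]
  refine one_div_le_one_div_of_le (by positivity) ?_
  calc ((n₁ : ℝ) + 1) ^ 2 * ((n₂ : ℝ) + 1) ^ 2 * ((n₃ : ℝ) + 1) ^ 2
      = ((n₁ : ℝ) + 1) ^ 2 * ((n₃ : ℝ) + 1) * (((n₂ : ℝ) + 1) ^ 2 * ((n₃ : ℝ) + 1)) := by ring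
    _ ≤ ((n₁ : ℝ) + 1) ^ a * ((n₃ : ℝ) + 1) * (N ^ 2 * N) := by gcongr
    _ ≤ ((n₁ : ℝ) + 1) ^ a * ((n₃ : ℝ) + 1) * N ^ (d + 1) := by
      rw [← pow_succ]; gcongr; exact h₃.trans' (by simp)

theorem wittenSl4Term_a01001_eq_add_sum (a d n₁ n₂ n₃ : ℕ) :
    wittenSl4Term a 0 1 0 0 (d + 1) (n₁, n₂, n₃) =
      tripleZetaTerm (d + 1) a 1 (n₃, n₁, n₂) +
        ∑ i ∈ Icc 1 a, tripleZetaTerm (d + 1) (a + 1 - i) i (n₁, n₃, n₂) := by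
  have hsplit := one_div_pow_mul_eq_add_sum a (x := (n₁ + 1 : ℝ)) (z := n₃ + 1)
    (by positivity) (by positivity) (by positivity)
  have hLHS : wittenSl4Term a 0 1 0 0 (d + 1) (n₁, n₂, n₃) =
      1 / ((n₁ + 1 : ℝ) ^ a * (n₃ + 1)) * (1 / (n₁ + n₂ + n₃ + 3 : ℝ) ^ (d + 1)) := by
    rw [one_div_mul_one_div]; simp only [wittenSl4Term, pow_zero, pow_one, mul_one]
  rw [hLHS, hsplit, add_mul, sum_mul]
  simp only [tripleZetaTerm, one_div_mul_one_div]
  congr 1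
  · congr 1; ring
  · exact sum_congr rfl fun i _ => by congr 1; ring

theorem wittenSl4_a01001 (a d : ℕ) (ha : 2 ≤ a) (hd : 2 ≤ d) :
    wittenSl4 a 0 1 0 0 (d + 1) =
      tripleZeta (d + 1) a 1 +
        ∑ i ∈ Finset.Icc 1 a, tripleZeta (d + 1) (a + 1 - i) i := by
  let σ : ℕ × ℕ × ℕ ≃ ℕ × ℕ × ℕ := (Equiv.prodAssoc ℕ ℕ ℕ).symm.trans (Equiv.prodComm _ _)
  let τ : ℕ × ℕ × ℕ ≃ ℕ × ℕ × ℕ := Equiv.prodCongr (Equiv.refl ℕ) (Equiv.prodComm ℕ ℕ)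
  have hF := summable_wittenSl4Term_a01001 ha hd
  have hsplit : wittenSl4Term a 0 1 0 0 (d + 1) = fun p => tripleZetaTerm (d + 1) a 1 (σ p) +
      ∑ i ∈ Icc 1 a, tripleZetaTerm (d + 1) (a + 1 - i) i (τ p) :=
    funext fun _ => wittenSl4Term_a01001_eq_add_sum ..
  obtain ⟨hσ, hτ⟩ := (hsplit ▸ hF).of_add_sum_of_nonneg (fun _ => tripleZetaTerm_nonneg ..)
    fun _ _ _ => tripleZetaTerm_nonneg ..
  rw [wittenSl4_eq_tsum hF, hsplit, hσ.tsum_add (summable_sum hτ), Summable.tsum_finsetSum hτ,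
    σ.tsum_eq, ← tripleZeta_eq_tsum (σ.summable_iff.mp hσ)]
  exact congr_arg _ <| sum_congr rfl fun i hi => by
    rw [τ.tsum_eq, ← tripleZeta_eq_tsum (τ.summable_iff.mp (hτ i hi))]
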